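/- arXiv:1704.07045 — 4 statements merged into one kernel-verified Lean document; each statement's English description precedes it below -/
import Mathlib

section
/- Let F_n be the free group on generators x_1, …, x_n, and let φ be the automorphism of F_n fixing x_1, …, x_{n-1} and sending x_n to w⁻¹ x_n w, where w is a fixed element of the subgroup generated by x_1, …, x_{n-1}, with w ≠ 1. Then the fixed subgroup of φ is exactly the subgroup generated by x_1, …, x_{n-1}. -/
/-!
Write `F = A ∗ B`, where `A` is generated by `x₁, …, x_{n-1}` and `B` by `x_n`, and view `w` as a
letter `h ∈ A`. Then `ρ := conj_h ∘ φ` conjugates `A` by `h` and is the identity on `B`, and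
`φ g = g` says `ρ g = h g h⁻¹`. If `g ∉ A`, write `g = a u b` with `a, b ∈ A` and `u` a reduced word
whose first and last letters lie outside `A`; then `ρ u = h u h⁻¹`. But `ρ u` is a reduced word
with the same first factor as `u`, while `h u h⁻¹` is a reduced word beginning with `h ∈ A`.
-/

namespace Monoid.CoprodI.NeWord

variable {ι : Type*} {G : ι → Type*} [∀ i, Group (G i)]

theorem head_index_eq_of_prod_eq {i j i' j' : ι} {u : NeWord G i j} {u' : NeWord G i' j'}
    (h : u.prod = u'.prod) : i = i' := by
  classical
  have hw : u.toWord = u'.toWord := Word.equiv.symm.injective h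
  have := congrArg (·.toList.head?) hw
  simp only [toWord, toList_head?, Option.some.injEq] at this
  exact congrArg Sigma.fst this

theorem exists_prod_eq_map_prod (ρ : CoprodI G →* CoprodI G)
    (hρ : ∀ i (x : G i), x ≠ 1 → ∃ y : G i, y ≠ 1 ∧ ρ (of x) = of y) {j k : ι} (u : NeWord G j k) :
    ∃ u' : NeWord G j k, u'.prod = ρ u.prod := by
  induction u with
  | singleton x hx =>
    obtain ⟨y, hy, hxy⟩ := hρ _ x hx
    exact ⟨singleton y hy, by rw [prod_singleton, prod_singleton, hxy]⟩
  | append u₁ hne u₂ ih₁ ih₂ =>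
    obtain ⟨u₁', h₁⟩ := ih₁
    obtain ⟨u₂', h₂⟩ := ih₂
    exact ⟨append u₁' hne u₂', by rw [append_prod, append_prod, map_mul, h₁, h₂]⟩

theorem prod_eq_of_head_or_exists_of_head_mul {j k : ι} (w : NeWord G j k) :
    (j = k ∧ w.prod = of w.head) ∨
      ∃ l, l ≠ j ∧ ∃ w' : NeWord G l k, w.prod = of w.head * w'.prod := by
  induction w with
  | singleton x hx => exact .inl ⟨rfl, prod_singleton x hx⟩
  | append w₁ hne w₂ ih₁ _ =>
    rcases ih₁ with ⟨rfl, h₁⟩ | ⟨l, hl, w₁', h₁⟩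
    · exact .inr ⟨_, hne.symm, w₂, by rw [append_prod, h₁, append_head]⟩
    · exact .inr ⟨l, hl, append w₁' hne w₂,
        by rw [append_prod, h₁, append_prod, append_head, mul_assoc]⟩

theorem exists_prod_eq_of_or_of_mul_prod (i : ι) {j k : ι} (w : NeWord G j k) :
    (∃ a : G i, w.prod = of a) ∨
      ∃ a : G i, ∃ l, l ≠ i ∧ ∃ w' : NeWord G l k, w.prod = of a * w'.prod := by
  by_cases hj : j = i
  · subst hj
    rcases prod_eq_of_head_or_exists_of_head_mul w with ⟨-, h⟩ | ⟨l, hl, w', h⟩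
    · exact .inl ⟨_, h⟩
    · exact .inr ⟨_, l, hl, w', h⟩
  · exact .inr ⟨1, j, hj, w, by rw [map_one, one_mul]⟩

theorem exists_prod_eq_of_or_prod_mul_of (i : ι) {j k : ι} (w : NeWord G j k) :
    (∃ a : G i, w.prod = of a) ∨
      ∃ a : G i, ∃ m, m ≠ i ∧ ∃ w' : NeWord G j m, w.prod = w'.prod * of a := by
  have hw : w.prod = w.inv.prod⁻¹ := by rw [inv_prod, inv_inv]
  rcases exists_prod_eq_of_or_of_mul_prod i w.inv with ⟨a, h⟩ | ⟨a, m, hm, w', h⟩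
  · exact .inl ⟨a⁻¹, by rw [hw, h, map_inv]⟩
  · exact .inr ⟨a⁻¹, m, hm, w'.inv, by rw [hw, h, inv_prod, mul_inv_rev, map_inv]⟩

end Monoid.CoprodI.NeWord

namespace Monoid.CoprodI

variable {ι : Type*} {G : ι → Type*} [∀ i, Group (G i)]

theorem mem_range_of_or_exists_eq_of_mul_prod_mul_of (i : ι) (g : CoprodI G) :
    g ∈ (of : G i →* _).range ∨ ∃ (a b : G i) (j k : ι), j ≠ i ∧ k ≠ i ∧
      ∃ u : NeWord G j k, g = of a * u.prod * of b := by
  classical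
  by_cases hg : g = 1
  · exact .inl (hg ▸ one_mem _)
  obtain ⟨j, k, w, hw⟩ := NeWord.of_word (Word.equiv g) fun h => hg (by
    rw [← Word.equiv.symm_apply_apply g, h]; exact Word.prod_empty)
  have hwg : w.prod = g := by rw [NeWord.prod, hw]; exact Word.equiv.symm_apply_apply g
  subst hwg
  rcases NeWord.exists_prod_eq_of_or_of_mul_prod i w with ⟨a, h⟩ | ⟨a, l, hl, w', h⟩
  · exact .inl ⟨a, h.symm⟩
  rcases NeWord.exists_prod_eq_of_or_prod_mul_of i w' with ⟨b, h'⟩ | ⟨b, m, hm, w'', h'⟩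
  · exact .inl ⟨a * b, by rw [h, h', map_mul]⟩
  · exact .inr ⟨a, b, l, m, hl, hm, w'', by rw [h, h', mul_assoc]⟩

theorem mem_range_of_of_map_eq_conj {i : ι} {h : G i} (hh : h ≠ 1) (ρ : CoprodI G →* CoprodI G)
    (hρi : ∀ a : G i, ρ (of a) = of (h * a * h⁻¹)) (hρ : ∀ j ≠ i, ∀ x : G j, ρ (of x) = of x)
    {g : CoprodI G} (hg : ρ g = of h * g * (of h)⁻¹) : g ∈ (of : G i →* _).range := by
  rcases mem_range_of_or_exists_eq_of_mul_prod_mul_of i g with hg' | ⟨a, b, j, k, hj, hk, u, rfl⟩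
  · exact hg'
  exfalso
  have hρu : ρ u.prod = of h * u.prod * (of h)⁻¹ := by
    simp only [map_mul, hρi, map_inv] at hg
    set c := of h * of a * (of h)⁻¹ with hc
    set d := of h * of b * (of h)⁻¹ with hd
    calc ρ u.prod = c⁻¹ * (c * ρ u.prod * d) * d⁻¹ := by group
      _ = c⁻¹ * (of h * (of a * u.prod * of b) * (of h)⁻¹) * d⁻¹ := by rw [hg]
      _ = of h * u.prod * (of h)⁻¹ := by rw [hc, hd]; group
  have hρ_letter : ∀ l (x : G l), x ≠ 1 → ∃ y : G l, y ≠ 1 ∧ ρ (of x) = of y := by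
    intro l x hx
    by_cases hl : l = i
    · subst hl
      exact ⟨h * x * h⁻¹, by simpa using hx, hρi x⟩
    · exact ⟨x, hx, hρ l hl x⟩
  obtain ⟨u', hu'⟩ := NeWord.exists_prod_eq_map_prod ρ hρ_letter u
  have hconj : (NeWord.append (.singleton h hh) hj.symm
      (NeWord.append u hk (.singleton h⁻¹ (inv_ne_one.mpr hh)))).prod =
        of h * u.prod * (of h)⁻¹ := by
    simp [mul_assoc]
  exact hj (NeWord.head_index_eq_of_prod_eq (hu'.trans (hρu.trans hconj.symm)))

end Monoid.CoprodI

namespace FreeGroup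

open Monoid

variable {X ι : Type*}

-- A named family, so that the factor index of `CoprodI.of a` can be inferred from `a`.
abbrev FiberFamily (π : X → ι) (i : ι) : Type _ := FreeGroup {x // π x = i}

def coprodIFiberEquiv (π : X → ι) : FreeGroup X ≃* CoprodI (FiberFamily π) :=
  MonoidHom.toMulEquiv (lift fun x => CoprodI.of (of ⟨x, rfl⟩))
    (CoprodI.lift fun _ => map Subtype.val) (by ext; simp) (by ext i ⟨x, rfl⟩; simp)

theorem coprodIFiberEquiv_of (π : X → ι) {x : X} {i : ι} (hx : π x = i) :
    coprodIFiberEquiv π (of x) =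
      CoprodI.of (M := FiberFamily π) (of ⟨x, hx⟩) := by
  subst hx
  simp [coprodIFiberEquiv]

theorem coprodIFiberEquiv_symm_of (π : X → ι) {i : ι} (a : FiberFamily π i) :
    (coprodIFiberEquiv π).symm (CoprodI.of (M := FiberFamily π) a) =
      map Subtype.val a := by
  simp [coprodIFiberEquiv]

theorem coprodIFiberEquiv_mem_range_of_iff (π : X → ι) (i : ι) (g : FreeGroup X) :
    coprodIFiberEquiv π g ∈ (CoprodI.of (M := FiberFamily π) (i := i)).range ↔
      g ∈ Subgroup.closure (of '' {x | π x = i}) := by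
  constructor
  · rintro ⟨a, ha⟩
    rw [← (coprodIFiberEquiv π).symm_apply_apply g, ← ha, coprodIFiberEquiv_symm_of,
      ← Subtype.range_coe_subtype, ← range_map]
    exact ⟨a, rfl⟩
  · intro hg
    refine (Subgroup.closure_le (K := CoprodI.of.range.comap (coprodIFiberEquiv π).toMonoidHom)).mpr
      ?_ hg
    rintro _ ⟨x, rfl, rfl⟩
    exact ⟨of ⟨x, rfl⟩, (coprodIFiberEquiv_of π rfl).symm⟩

theorem apply_eq_self_iff_mem_closure {s : Set X} {w : FreeGroup X}
    (hw : w ∈ Subgroup.closure (of '' s)) (hw_ne : w ≠ 1) (φ : FreeGroup X →* FreeGroup X)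
    (hφs : ∀ x ∈ s, φ (of x) = of x) (hφ_compl : ∀ x ∉ s, φ (of x) = w⁻¹ * of x * w)
    (g : FreeGroup X) : φ g = g ↔ g ∈ Subgroup.closure (of '' s) := by
  classical
  let π (x : X) : Bool := decide (x ∈ s)
  let e := coprodIFiberEquiv π
  have hmem (g : FreeGroup X) : e g ∈ (CoprodI.of (M := FiberFamily π) (i := true)).range ↔
      g ∈ Subgroup.closure (of '' s) := by
    simpa [π] using coprodIFiberEquiv_mem_range_of_iff π true g
  have hfix : ∀ g ∈ Subgroup.closure (of '' s), φ g = g :=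
    MonoidHom.eqOn_closure (f := φ) (g := .id _) (by rintro _ ⟨x, hx, rfl⟩; exact hφs x hx)
  refine ⟨fun hg => ?_, hfix g⟩
  obtain ⟨h, hwh⟩ := (hmem w).mpr hw
  have hh : h ≠ 1 := by
    rintro rfl
    rw [_root_.map_one] at hwh
    exact hw_ne (e.injective (by rw [← hwh, _root_.map_one]))
  let ρ := (MulAut.conj (e w)).toMonoidHom.comp (e.toMonoidHom.comp (φ.comp e.symm.toMonoidHom))
  have hρ_apply (y) : ρ y = e w * e (φ (e.symm y)) * (e w)⁻¹ := rfl
  have hρ_true (a : FiberFamily π true) : ρ (CoprodI.of a) = CoprodI.of (h * a * h⁻¹) := by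
    rw [hρ_apply, hfix _ ((hmem _).mp (by rw [e.apply_symm_apply]; exact ⟨a, rfl⟩)),
      e.apply_symm_apply, ← hwh, _root_.map_mul, _root_.map_mul, _root_.map_inv]
  have hρ_false : ∀ b ≠ true, ∀ a : FiberFamily π b, ρ (CoprodI.of a) = CoprodI.of a := by
    intro b hb
    obtain rfl : b = false := Bool.eq_false_iff.mpr hb
    suffices ρ.comp CoprodI.of = (CoprodI.of : FiberFamily π false →* _) from
      DFunLike.congr_fun this
    refine ext_hom _ _ fun ⟨x, hx⟩ => ?_
    have hxs : x ∉ s := by simpa [π] using hx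
    rw [MonoidHom.comp_apply, hρ_apply, coprodIFiberEquiv_symm_of, map.of, hφ_compl x hxs,
      _root_.map_mul, _root_.map_mul, _root_.map_inv, coprodIFiberEquiv_of π hx]
    group
  have hg' : ρ (e g) = CoprodI.of h * e g * (CoprodI.of h)⁻¹ := by
    rw [hρ_apply, e.symm_apply_apply, hg, hwh]
  exact (hmem g).mp (CoprodI.mem_range_of_of_map_eq_conj hh ρ hρ_true hρ_false hg')

end FreeGroup

theorem stmt_1 (n : ℕ) (w : FreeGroup (Fin (n + 1)))
    (hw_mem : w ∈ Subgroup.closure (FreeGroup.of '' {i : Fin (n + 1) | i ≠ Fin.last n}))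
    (hw_ne : w ≠ 1)
    (φ : FreeGroup (Fin (n + 1)) ≃* FreeGroup (Fin (n + 1)))
    (hφ₁ : ∀ i : Fin (n + 1), i ≠ Fin.last n → φ (FreeGroup.of i) = FreeGroup.of i)
    (hφ₂ : φ (FreeGroup.of (Fin.last n)) = w⁻¹ * FreeGroup.of (Fin.last n) * w) :
    ∀ g : FreeGroup (Fin (n + 1)),
      φ g = g ↔ g ∈ Subgroup.closure (FreeGroup.of '' {i : Fin (n + 1) | i ≠ Fin.last n}) :=
  FreeGroup.apply_eq_self_iff_mem_closure hw_mem hw_ne φ.toMonoidHom hφ₁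
    fun i hi => by rw [Set.mem_ofPred_eq, not_not] at hi; subst hi; exact hφ₂
end

section
/- In the braid group B_3 with x = σ₂σ₁²σ₂⁻¹, y = σ₂², and z = σ₁²xy, conjugation by σ₁ sends x to xyx⁻¹ and y to x, while conjugation by σ₂ sends x to y⁻¹x⁻¹z and fixes y. -/
/-- The braid relations on `m` generators. -/
def braidRels (m : ℕ) : Set (FreeGroup (Fin m)) :=
  {r | ∃ i j : Fin m,
    (((i : ℕ) + 1 < (j : ℕ)) ∧
      r = FreeGroup.of i * FreeGroup.of j * (FreeGroup.of i)⁻¹ * (FreeGroup.of j)⁻¹) ∨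
    (((i : ℕ) + 1 = (j : ℕ)) ∧
      r = FreeGroup.of i * FreeGroup.of j * FreeGroup.of i *
        (FreeGroup.of j * FreeGroup.of i * FreeGroup.of j)⁻¹)}

/-- The braid group on `n` strands. -/
abbrev BraidGroup (n : ℕ) := PresentedGroup (braidRels (n - 1))

/-- The standard generator `σᵢ` of the braid group. -/
def braidGen (n : ℕ) (i : Fin (n - 1)) : BraidGroup n := PresentedGroup.of i

lemma braid_rel_3 :
    braidGen 3 ⟨0, by norm_num⟩ * braidGen 3 ⟨1, by norm_num⟩ * braidGen 3 ⟨0, by norm_num⟩ =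
    braidGen 3 ⟨1, by norm_num⟩ * braidGen 3 ⟨0, by norm_num⟩ * braidGen 3 ⟨1, by norm_num⟩ := by
  have key : PresentedGroup.mk (braidRels 2)
      (FreeGroup.of (⟨0, by norm_num⟩ : Fin 2) * FreeGroup.of (⟨1, by norm_num⟩ : Fin 2) *
        FreeGroup.of (⟨0, by norm_num⟩ : Fin 2) *
        (FreeGroup.of (⟨1, by norm_num⟩ : Fin 2) * FreeGroup.of (⟨0, by norm_num⟩ : Fin 2) *
          FreeGroup.of (⟨1, by norm_num⟩ : Fin 2))⁻¹) = 1 := by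
    apply (QuotientGroup.eq_one_iff _).mpr
    apply Subgroup.subset_normalClosure
    exact ⟨⟨0, by norm_num⟩, ⟨1, by norm_num⟩, Or.inr ⟨rfl, rfl⟩⟩
  rw [map_mul, map_mul, map_mul, map_inv, map_mul, mul_inv_eq_one] at key
  exact key

set_option maxHeartbeats 1600000 in
theorem stmt_5
    (σ₁ σ₂ x y z : BraidGroup 3)
    (hσ₁ : σ₁ = braidGen 3 ⟨0, by norm_num⟩)
    (hσ₂ : σ₂ = braidGen 3 ⟨1, by norm_num⟩)
    (hx : x = σ₂ * σ₁ ^ 2 * σ₂⁻¹)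
    (hy : y = σ₂ ^ 2)
    (hz : z = σ₁ ^ 2 * x * y) :
    σ₁⁻¹ * x * σ₁ = x * y * x⁻¹ ∧
    σ₁⁻¹ * y * σ₁ = x ∧
    σ₂⁻¹ * x * σ₂ = y⁻¹ * x⁻¹ * z ∧
    σ₂⁻¹ * y * σ₂ = y := by
  have h : σ₁ * σ₂ * σ₁ = σ₂ * σ₁ * σ₂ := by
    rw [hσ₁, hσ₂]; exact braid_rel_3
  -- conjugation lemmas
  have c1 : σ₁⁻¹ * σ₂ * σ₁ = σ₂ * σ₁ * σ₂⁻¹ := by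
    calc σ₁⁻¹ * σ₂ * σ₁ = σ₁⁻¹ * (σ₂ * σ₁ * σ₂) * σ₂⁻¹ := by simp [mul_assoc, pow_succ]
    _ = σ₁⁻¹ * (σ₁ * σ₂ * σ₁) * σ₂⁻¹ := by rw [h]
    _ = σ₂ * σ₁ * σ₂⁻¹ := by simp [mul_assoc, pow_succ]
  have c1' : σ₁⁻¹ * σ₂⁻¹ * σ₁ = σ₂ * σ₁⁻¹ * σ₂⁻¹ := by
    calc σ₁⁻¹ * σ₂⁻¹ * σ₁ = (σ₁⁻¹ * σ₂ * σ₁)⁻¹ := by simp [mul_assoc, pow_succ]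
    _ = (σ₂ * σ₁ * σ₂⁻¹)⁻¹ := by rw [c1]
    _ = σ₂ * σ₁⁻¹ * σ₂⁻¹ := by simp [mul_assoc, pow_succ]
  have k2 : σ₂⁻¹ * σ₁ * σ₂ = σ₁ * σ₂ * σ₁⁻¹ := by
    calc σ₂⁻¹ * σ₁ * σ₂ = σ₂⁻¹ * (σ₂ * σ₁ * σ₂) * σ₁⁻¹ := by
          rw [← h]; group
    _ = σ₁ * σ₂ * σ₁⁻¹ := by simp [mul_assoc, pow_succ]
  have c2 : σ₂⁻¹ * σ₁ * σ₁ * σ₂ = σ₁ * σ₂ * σ₂ * σ₁⁻¹ := by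
    calc σ₂⁻¹ * σ₁ * σ₁ * σ₂ = (σ₂⁻¹ * σ₁ * σ₂) * (σ₂⁻¹ * σ₁ * σ₂) := by simp [mul_assoc, pow_succ]
    _ = (σ₁ * σ₂ * σ₁⁻¹) * (σ₁ * σ₂ * σ₁⁻¹) := by rw [k2]
    _ = σ₁ * σ₂ * σ₂ * σ₁⁻¹ := by simp [mul_assoc, pow_succ]
  refine ⟨?_, ?_, ?_, ?_⟩
  · rw [hx, hy]
    calc σ₁⁻¹ * (σ₂ * σ₁ ^ 2 * σ₂⁻¹) * σ₁
        = (σ₁⁻¹ * σ₂ * σ₁) * σ₁ * σ₁ * (σ₁⁻¹ * σ₂⁻¹ * σ₁) := by simp [mul_assoc, pow_succ]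
    _ = (σ₂ * σ₁ * σ₂⁻¹) * σ₁ * σ₁ * (σ₂ * σ₁⁻¹ * σ₂⁻¹) := by rw [c1, c1']
    _ = σ₂ * σ₁ * (σ₂⁻¹ * σ₁ * σ₁ * σ₂) * σ₁⁻¹ * σ₂⁻¹ := by simp [mul_assoc, pow_succ]
    _ = σ₂ * σ₁ * (σ₁ * σ₂ * σ₂ * σ₁⁻¹) * σ₁⁻¹ * σ₂⁻¹ := by rw [c2]
    _ = σ₂ * σ₁ ^ 2 * σ₂⁻¹ * σ₂ ^ 2 * (σ₂ * σ₁ ^ 2 * σ₂⁻¹)⁻¹ := by simp [mul_assoc, pow_succ]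
  · rw [hx, hy]
    calc σ₁⁻¹ * σ₂ ^ 2 * σ₁ = (σ₁⁻¹ * σ₂ * σ₁) * (σ₁⁻¹ * σ₂ * σ₁) := by simp [mul_assoc, pow_succ]
    _ = (σ₂ * σ₁ * σ₂⁻¹) * (σ₂ * σ₁ * σ₂⁻¹) := by rw [c1]
    _ = σ₂ * σ₁ ^ 2 * σ₂⁻¹ := by simp [mul_assoc, pow_succ]
  · rw [hz, hx, hy]
    have comm : σ₁ * σ₁ * (σ₂ * σ₁ * σ₁ * σ₂) = σ₂ * σ₁ * σ₁ * σ₂ * (σ₁ * σ₁) := by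
      calc σ₁ * σ₁ * (σ₂ * σ₁ * σ₁ * σ₂) = σ₁ * (σ₁ * σ₂ * σ₁) * (σ₁ * σ₂) := by simp [mul_assoc, pow_succ]
      _ = σ₁ * (σ₂ * σ₁ * σ₂) * (σ₁ * σ₂) := by rw [h]
      _ = (σ₁ * σ₂ * σ₁) * (σ₂ * σ₁ * σ₂) := by simp [mul_assoc, pow_succ]
      _ = (σ₂ * σ₁ * σ₂) * (σ₂ * σ₁ * σ₂) := by rw [h]
      _ = σ₂ * σ₁ * (σ₂ * σ₂ * σ₁ * σ₂) := by simp [mul_assoc, pow_succ]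
      _ = σ₂ * σ₁ * (σ₂ * (σ₂ * σ₁ * σ₂)) := by simp [mul_assoc, pow_succ]
      _ = σ₂ * σ₁ * (σ₂ * (σ₁ * σ₂ * σ₁)) := by rw [h]
      _ = σ₂ * σ₁ * σ₁ * σ₂ * (σ₁ * σ₁) := by
            calc σ₂ * σ₁ * (σ₂ * (σ₁ * σ₂ * σ₁))
                = σ₂ * σ₁ * (σ₂ * σ₁ * σ₂) * σ₁ := by simp [mul_assoc, pow_succ]
            _ = σ₂ * σ₁ * (σ₁ * σ₂ * σ₁) * σ₁ := by rw [h]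
            _ = σ₂ * σ₁ * σ₁ * σ₂ * (σ₁ * σ₁) := by simp [mul_assoc, pow_succ]
    calc σ₂⁻¹ * (σ₂ * σ₁ ^ 2 * σ₂⁻¹) * σ₂ = σ₁ * σ₁ := by simp [mul_assoc, pow_succ]
    _ = (σ₂ * σ₁ * σ₁ * σ₂)⁻¹ * (σ₂ * σ₁ * σ₁ * σ₂ * (σ₁ * σ₁)) := by simp [mul_assoc, pow_succ]
    _ = (σ₂ * σ₁ * σ₁ * σ₂)⁻¹ * (σ₁ * σ₁ * (σ₂ * σ₁ * σ₁ * σ₂)) := by rw [comm]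
    _ = (σ₂ ^ 2)⁻¹ * (σ₂ * σ₁ ^ 2 * σ₂⁻¹)⁻¹ *
          (σ₁ ^ 2 * (σ₂ * σ₁ ^ 2 * σ₂⁻¹) * σ₂ ^ 2) := by simp [mul_assoc, pow_succ]
  · rw [hy]; group
end

section
/- Let F be the free group on generators a, b, c. Set x = abc, y = c, z = a, and let α be the automorphism of F with α(x) = x, α(y) = xyx⁻¹, α(z) = (xy)z(xy)⁻¹. Then the fixed subgroup of α is the cyclic subgroup generated by x. -/
/-!
Conjugating `α` by the automorphism `a ↦ abc, b ↦ c, c ↦ a` gives `β` with `β a = a`,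
`β b = a b a⁻¹` and `β c = (ab) c (ab)⁻¹`; on the subgroup `⟨a, b⟩` of words without `c`, `β` is
conjugation by `a`. Split a reduced word at its first `c`-letter, `g = u c^{±1} v` with
`u ∈ ⟨a, b⟩`. The reduced word of `β g` then splits as `(a u b) c^{±1} (⋯)`, because no `c`-letter
cancels, so a fixed `g` containing `c` would satisfy `a u b = u`, which is impossible by counting
`b`s. Hence the fixed points lie in `⟨a, b⟩`, where being fixed means commuting with `a`, and the
same splitting argument, applied to conjugation by `a`, shows that the centraliser of `a` is `⟨a⟩`.
-/

namespace FreeGroup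

theorem mk_singleton_false {α : Type*} (i : α) : mk [(i, false)] = (of i)⁻¹ := by
  rw [of, inv_mk]
  rfl

theorem map_mk_eq_conj {α : Type*} {φ : FreeGroup α →* FreeGroup α} {t : α} {w : FreeGroup α}
    (hφt : φ (of t) = w * of t * w⁻¹) (e : Bool) : φ (mk [(t, e)]) = w * mk [(t, e)] * w⁻¹ := by
  cases e
  · rw [mk_singleton_false, _root_.map_inv, hφt]
    group
  · exact hφt

variable {α : Type*} [DecidableEq α]

def supported (S : Set α) : Subgroup (FreeGroup α) where
  carrier := {g | ∀ l ∈ g.toWord, l.1 ∈ S}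
  one_mem' := by simp
  mul_mem' {g h} hg hh l hl := by
    rcases List.mem_append.mp ((toWord_mul_sublist g h).subset hl) with hl | hl
    exacts [hg l hl, hh l hl]
  inv_mem' {g} hg l hl := by
    rw [toWord_inv, invRev, List.mem_reverse, List.mem_map] at hl
    obtain ⟨l, hl, rfl⟩ := hl
    exact hg l hl

variable {S : Set α}

theorem mem_supported {g : FreeGroup α} : g ∈ supported S ↔ ∀ l ∈ g.toWord, l.1 ∈ S := Iff.rfl

theorem of_mem_supported {i : α} (hi : i ∈ S) : of i ∈ supported S := by
  simpa [mem_supported, toWord_of] using hi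

theorem supported_le_closure : supported S ≤ Subgroup.closure (of '' S) := by
  suffices h : ∀ L : List (α × Bool), (∀ l ∈ L, l.1 ∈ S) → mk L ∈ Subgroup.closure (of '' S) from
    fun g hg => mk_toWord (x := g) ▸ h _ hg
  intro L hL
  induction L with
  | nil => exact Subgroup.one_mem _
  | cons l L ih =>
    obtain ⟨i, b⟩ := l
    have hi : of i ∈ Subgroup.closure (of '' S) :=
      Subgroup.subset_closure ⟨i, hL _ (.head _), rfl⟩
    rw [← List.singleton_append, ← mul_mk]
    refine Subgroup.mul_mem _ ?_ (ih fun l hl => hL l (.tail _ hl))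
    cases b
    · rw [mk_singleton_false]
      exact Subgroup.inv_mem _ hi
    · exact hi

theorem IsReduced.toWord_mk {L : List (α × Bool)} (hL : IsReduced L) : (mk L).toWord = L := by
  rw [FreeGroup.toWord_mk, hL.reduce_eq]

variable {t : α} {g u v w : FreeGroup α} {e : Bool} {φ : FreeGroup α →* FreeGroup α}

theorem mem_supported_compl_singleton : g ∈ supported {t}ᶜ ↔ ∀ l ∈ g.toWord, l.1 ≠ t := Iff.rfl

theorem toWord_mul_mk_mul (hu : u ∈ supported {t}ᶜ) (hv : v.toWord.head? ≠ some (t, !e)) :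
    (u * mk [(t, e)] * v).toWord = u.toWord ++ (t, e) :: v.toWord := by
  have h : u * mk [(t, e)] * v = mk (u.toWord ++ (t, e) :: v.toWord) := by
    conv_lhs => rw [← mk_toWord (x := u), ← mk_toWord (x := v)]
    simp [mul_mk]
  rw [h, IsReduced.toWord_mk]
  refine List.isChain_append.mpr
    ⟨isReduced_toWord, List.isChain_cons.mpr ⟨?_, isReduced_toWord⟩, ?_⟩
  · rintro ⟨s, f⟩ hy rfl
    cases e <;> cases f <;> simp_all
  · intro x hx y hy hxy
    obtain rfl : (t, e) = y := by simpa using hy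
    exact absurd hxy ((mem_supported_compl_singleton.mp hu) x (List.mem_of_mem_getLast? hx))

theorem mul_mk_mul_of_toWord_eq {x : α × Bool} (h : g.toWord = u.toWord ++ x :: v.toWord) :
    u * mk [x] * v = g := by
  conv_lhs => rw [← mk_toWord (x := u), ← mk_toWord (x := v)]
  rw [mul_mk, mul_mk, ← mk_toWord (x := g), h]
  simp

theorem head?_toWord_ne_of_toWord_eq {x : α × Bool} (h : g.toWord = u.toWord ++ x :: v.toWord) :
    v.toWord.head? ≠ some (x.1, !x.2) := by
  have hred : IsReduced (x :: v.toWord) :=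
    (isReduced_toWord (x := g)).infix ⟨u.toWord, [], by simp [h]⟩
  intro hv
  have := (List.isChain_cons.mp hred).1 _ hv rfl
  simp at this

theorem exists_toWord_eq_append (hg : g ∉ supported {t}ᶜ) :
    ∃ u ∈ supported {t}ᶜ, ∃ (e : Bool) (v : FreeGroup α),
      g.toWord = u.toWord ++ (t, e) :: v.toWord := by
  obtain ⟨l, hl, hlt⟩ : ∃ l ∈ g.toWord, l.1 = t := by
    by_contra! h
    exact hg (mem_supported_compl_singleton.mpr h)
  obtain ⟨⟨s, e⟩, hfind⟩ : ∃ x, g.toWord.find? (·.1 = t) = some x :=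
    Option.isSome_iff_exists.mp (List.find?_isSome.mpr ⟨l, hl, by simpa⟩)
  obtain ⟨hs, A, B, hAB, hA⟩ := List.find?_eq_some_iff_append.mp hfind
  obtain rfl : s = t := by simpa using hs
  have hred : IsReduced (A ++ (s, e) :: B) := hAB ▸ isReduced_toWord
  have hAred : IsReduced A := hred.infix ⟨[], (s, e) :: B, by simp⟩
  have hBred : IsReduced B := hred.infix ⟨A ++ [(s, e)], [], by simp⟩
  refine ⟨mk A, ?_, e, mk B, ?_⟩
  · rw [mem_supported, hAred.toWord_mk]
    simpa using hA
  · rw [hAred.toWord_mk, hBred.toWord_mk, hAB]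

theorem eq_of_toWord_append_eq {u' v' : FreeGroup α} {e' : Bool} (hu : u ∈ supported {t}ᶜ)
    (hu' : u' ∈ supported {t}ᶜ)
    (h : u.toWord ++ (t, e) :: v.toWord = u'.toWord ++ (t, e') :: v'.toWord) : u = u' := by
  have := congrArg (List.takeWhile (fun l => l.1 ≠ t)) h
  rw [List.takeWhile_append_of_pos (by simpa using mem_supported_compl_singleton.mp hu),
    List.takeWhile_append_of_pos (by simpa using mem_supported_compl_singleton.mp hu')] at this
  simpa using this

/-- `w⁻¹ * φ v` is `v` with each maximal `t`-free block `u` replaced by `w⁻¹ * φ u * w`; since `φ`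
is injective no block collapses, so no `t`-letters cancel. -/
theorem head?_toWord_inv_mul_map_ne (hφ : Function.Injective φ)
    (hφS : ∀ u ∈ supported {t}ᶜ, φ u ∈ supported {t}ᶜ) (hw : w ∈ supported {t}ᶜ)
    (hφt : φ (of t) = w * of t * w⁻¹) (v : FreeGroup α) (hv : v.toWord.head? ≠ some (t, e)) :
    (w⁻¹ * φ v).toWord.head? ≠ some (t, e) := by
  induction hn : v.toWord.length using Nat.strong_induction_on generalizing v e with
  | _ n ih =>
  by_cases hvS : v ∈ supported {t}ᶜ
  · intro h
    exact mem_supported_compl_singleton.mp (mul_mem (inv_mem hw) (hφS v hvS)) _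
      (List.mem_of_mem_head? h) rfl
  obtain ⟨u, hu, f, v', hsplit⟩ := exists_toWord_eq_append hvS
  have hv' := head?_toWord_ne_of_toWord_eq hsplit
  have hlen : v'.toWord.length < n := by
    rw [← hn, hsplit, List.length_append, List.length_cons]
    omega
  have hconj : w⁻¹ * φ u * w ∈ supported {t}ᶜ :=
    mul_mem (mul_mem (inv_mem hw) (hφS u hu)) hw
  have hdecomp : w⁻¹ * φ v = (w⁻¹ * φ u * w) * mk [(t, f)] * (w⁻¹ * φ v') := by
    rw [← mul_mk_mul_of_toWord_eq hsplit, _root_.map_mul, _root_.map_mul, map_mk_eq_conj hφt]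
    group
  rw [hdecomp, toWord_mul_mk_mul hconj (ih _ hlen v' hv' rfl)]
  rcases hx : (w⁻¹ * φ u * w).toWord with _ | ⟨x, _⟩
  · have : u = 1 := hφ (by simpa [mul_assoc, inv_mul_eq_one] using toWord_eq_nil_iff.mp hx)
    simpa [this, hsplit] using hv
  · rintro ⟨⟩
    exact mem_supported_compl_singleton.mp hconj (t, e) (by simp [hx]) rfl

theorem mem_supported_of_map_eq_self (hφ : Function.Injective φ)
    (hφS : ∀ u ∈ supported {t}ᶜ, φ u ∈ supported {t}ᶜ) (hw : w ∈ supported {t}ᶜ)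
    (hφt : φ (of t) = w * of t * w⁻¹) (hfix : ∀ u ∈ supported {t}ᶜ, φ u * w ≠ u)
    (hg : φ g = g) : g ∈ supported {t}ᶜ := by
  by_contra hgS
  obtain ⟨u, hu, e, v, hsplit⟩ := exists_toWord_eq_append hgS
  have hdecomp : φ g = (φ u * w) * mk [(t, e)] * (w⁻¹ * φ v) := by
    rw [← mul_mk_mul_of_toWord_eq hsplit, _root_.map_mul, _root_.map_mul, map_mk_eq_conj hφt]
    group
  have hword := toWord_mul_mk_mul (mul_mem (hφS u hu) hw)
    (head?_toWord_inv_mul_map_ne hφ hφS hw hφt v (head?_toWord_ne_of_toWord_eq hsplit))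
  rw [← hdecomp, hg, hsplit] at hword
  exact hfix u hu (eq_of_toWord_append_eq (mul_mem (hφS u hu) hw) hu hword.symm)

theorem mem_zpowers_of_commute {i : α} (h : Commute (of i) g) : g ∈ Subgroup.zpowers (of i) := by
  have hg : g ∈ supported {i} := by
    intro l hl
    by_contra hli
    have hi : of i ∈ supported {l.1}ᶜ := of_mem_supported (Ne.symm hli)
    refine mem_supported_of_map_eq_self (φ := (MulAut.conj (of i)).toMonoidHom)
      (MulAut.conj (of i)).injective (fun u hu => ?_) hi (by simp) (fun u _ => ?_) ?_ l hl rfl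
    · simpa using mul_mem (mul_mem hi hu) (inv_mem hi)
    · simp
    · simp [h.eq]
  rw [Subgroup.zpowers_eq_closure]
  simpa using supported_le_closure hg

end FreeGroup

open FreeGroup

theorem map_eq_conj_of_mem_supported (β : FreeGroup (Fin 3) ≃* FreeGroup (Fin 3))
    (h0 : β (of 0) = of 0) (h1 : β (of 1) = of 0 * of 1 * (of 0)⁻¹) {u : FreeGroup (Fin 3)}
    (hu : u ∈ supported {2}ᶜ) : β u = of 0 * u * (of 0)⁻¹ := by
  have : Subgroup.closure (of '' {2}ᶜ) ≤
      β.toMonoidHom.eqLocus (MulAut.conj (of (0 : Fin 3))).toMonoidHom := by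
    rw [Subgroup.closure_le]
    rintro _ ⟨i, hi, rfl⟩
    fin_cases i
    · simp [MonoidHom.eqLocus, h0]
    · simp [MonoidHom.eqLocus, h1]
    · simp at hi
  exact this (supported_le_closure hu)

theorem mem_supported_compl_two_of_map_eq_self (β : FreeGroup (Fin 3) ≃* FreeGroup (Fin 3))
    (h0 : β (of 0) = of 0) (h1 : β (of 1) = of 0 * of 1 * (of 0)⁻¹)
    (h2 : β (of 2) = (of 0 * of 1) * of 2 * (of 0 * of 1)⁻¹) {g : FreeGroup (Fin 3)}
    (hg : β g = g) : g ∈ supported {2}ᶜ := by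
  have ha : of 0 ∈ supported ({2}ᶜ : Set (Fin 3)) := of_mem_supported (by decide)
  have hb : of 1 ∈ supported ({2}ᶜ : Set (Fin 3)) := of_mem_supported (by decide)
  refine mem_supported_of_map_eq_self (φ := β.toMonoidHom) β.injective (fun u hu => ?_)
    (mul_mem ha hb) h2 (fun u hu h => ?_) hg
  · rw [MulEquiv.coe_toMonoidHom, map_eq_conj_of_mem_supported β h0 h1 hu]
    exact mul_mem (mul_mem ha hu) (inv_mem ha)
  · let bExponent : FreeGroup (Fin 3) →* Multiplicative ℤ :=
      lift fun i => if i = 1 then Multiplicative.ofAdd 1 else 1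
    rw [MulEquiv.coe_toMonoidHom, map_eq_conj_of_mem_supported β h0 h1 hu] at h
    simpa [bExponent] using congrArg bExponent h

theorem exists_mulEquiv_basis_abc_c_a : ∃ θ : FreeGroup (Fin 3) ≃* FreeGroup (Fin 3),
    θ (of 0) = of 0 * of 1 * of 2 ∧ θ (of 1) = of 2 ∧ θ (of 2) = of 0 := by
  let θ : FreeGroup (Fin 3) →* FreeGroup (Fin 3) := lift ![of 0 * of 1 * of 2, of 2, of 0]
  let σ : FreeGroup (Fin 3) →* FreeGroup (Fin 3) := lift ![of 2, (of 2)⁻¹ * of 0 * (of 1)⁻¹, of 1]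
  refine ⟨θ.toMulEquiv σ ?_ ?_, ?_, ?_, ?_⟩
  · ext i
    fin_cases i <;> simp [θ, σ]
    group
  · ext i
    fin_cases i <;> simp [θ, σ]
    group
  all_goals simp [θ]

theorem map_eq_self_iff_mem_zpowers (β : FreeGroup (Fin 3) ≃* FreeGroup (Fin 3))
    (h0 : β (of 0) = of 0) (h1 : β (of 1) = of 0 * of 1 * (of 0)⁻¹)
    (h2 : β (of 2) = (of 0 * of 1) * of 2 * (of 0 * of 1)⁻¹) (g : FreeGroup (Fin 3)) :
    β g = g ↔ g ∈ Subgroup.zpowers (of 0) := by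
  refine ⟨fun hg => mem_zpowers_of_commute ?_, ?_⟩
  · have hconj := map_eq_conj_of_mem_supported β h0 h1
      (mem_supported_compl_two_of_map_eq_self β h0 h1 h2 hg)
    rw [hg] at hconj
    exact (eq_mul_inv_iff_mul_eq.mp hconj).symm
  · rintro ⟨k, rfl⟩
    simp [h0]

theorem stmt_12
    (x y z : FreeGroup (Fin 3))
    (hx : x = FreeGroup.of 0 * FreeGroup.of 1 * FreeGroup.of 2)
    (hy : y = FreeGroup.of 2)
    (hz : z = FreeGroup.of 0)
    (α : FreeGroup (Fin 3) ≃* FreeGroup (Fin 3))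
    (hαx : α x = x)
    (hαy : α y = x * y * x⁻¹)
    (hαz : α z = (x * y) * z * (x * y)⁻¹) :
    ∀ g : FreeGroup (Fin 3), α g = g ↔ g ∈ Subgroup.zpowers x := by
  subst hx hy hz
  obtain ⟨θ, hθx, hθy, hθz⟩ := exists_mulEquiv_basis_abc_c_a
  let β := θ.trans (α.trans θ.symm)
  have hβ : ∀ g, β g = θ.symm (α (θ g)) := fun _ => rfl
  have key := map_eq_self_iff_mem_zpowers β
    (by rw [hβ, MulEquiv.symm_apply_eq]; simp [hθx, hαx])
    (by rw [hβ, MulEquiv.symm_apply_eq]; simp [hθx, hθy, hαy])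
    (by rw [hβ, MulEquiv.symm_apply_eq]; simp [hθx, hθy, hθz, hαz])
  intro g
  calc α g = g ↔ β (θ.symm g) = θ.symm g := by
        rw [hβ, θ.apply_symm_apply, θ.symm.injective.eq_iff]
    _ ↔ θ.symm g ∈ Subgroup.zpowers (of 0) := key _
    _ ↔ g ∈ Subgroup.zpowers (of 0 * of 1 * of 2) := by
        simp only [Subgroup.mem_zpowers_iff, ← hθx, ← map_zpow, MulEquiv.eq_symm_apply]
end

section
/- Let G = ⟨z⟩ × F₂ with z central of infinite order and F₂ free on x, y. The subgroup of Aut(G) generated by ξ (x ↦ xz, y ↦ y, z ↦ z) and η (x ↦ x, y ↦ yz, z ↦ z) is free abelian of rank 2 and is normal in Aut(G). -/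
/-!
The automorphisms `ψ` of a group `G` with `g⁻¹ * ψ g` central for every `g` and fixing the centre
pointwise form a normal subgroup of `Aut G`, because the centre is characteristic. For
`G = ℤ × F₂` the centre is `ℤ × 1`: an element of a free group commuting with a generator `d`
has a reduced word beginning with `d`, so a nontrivial central element would begin with both
generators. Both `ξ` and `η` lie in that subgroup, and `ψ ↦ (x⁻¹ ψ x, y⁻¹ ψ y)` is an injective
homomorphism from it to `Z(G)² ≅ ℤ²` sending `ξ, η` to the standard basis. Hence `⟨ξ, η⟩` is
the whole subgroup, which is normal, and it is isomorphic to `ℤ²`.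
-/

open Function Multiplicative Subgroup

namespace FreeGroup

variable {α : Type*}

theorem head_toWord_of_commute_of [DecidableEq α] {w : FreeGroup α} {d : α}
    (h : Commute (of d) w) : ∀ c ∈ w.toWord.head?, c.1 = d := by
  intro c hc
  obtain ⟨rest, hrest⟩ : ∃ rest, w.toWord = c :: rest := by
    cases hw : w.toWord <;> simp_all
  by_contra hcd
  obtain ⟨s, hs⟩ : ∃ s : Bool, ∀ e ∈ w.toWord.getLast?, e.1 = d → e.2 = s := by
    cases w.toWord.getLast? with
    | none => exact ⟨true, by simp⟩
    | some e => exact ⟨e.2, by simp⟩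
  -- With the sign `s` chosen this way, `(d, s) :: w.toWord` and `w.toWord ++ [(d, s)]` are both
  -- reduced, so they are the reduced words of the equal elements `of d ^ (±1) * w` and
  -- `w * of d ^ (±1)`.
  have hcomm : Commute (mk [(d, s)]) w := by
    cases s
    exacts [h.inv_left, h]
  have hleft : IsReduced ((d, s) :: w.toWord) := by
    rw [hrest, isReduced_cons_cons]
    exact ⟨fun hdc => absurd hdc.symm hcd, hrest ▸ isReduced_toWord⟩
  have hright : IsReduced (w.toWord ++ [(d, s)]) :=
    List.isChain_append.2 ⟨isReduced_toWord, List.isChain_singleton _, by simpa using hs⟩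
  have hwords := congrArg toWord hcomm.eq
  rw [toWord_mul, toWord_mul, toWord_mk, IsReduced.singleton.reduce_eq] at hwords
  rw [List.singleton_append, hleft.reduce_eq, hright.reduce_eq, hrest] at hwords
  exact hcd (congrArg Prod.fst (List.head_eq_of_cons_eq hwords)).symm

theorem center_eq_bot [Nontrivial α] : center (FreeGroup α) = ⊥ := by
  classical
  refine eq_bot_iff.2 fun w hw => ?_
  obtain ⟨a, b, hab⟩ := exists_pair_ne α
  have hcomm (d : α) : Commute (of d) w := mem_center_iff.1 hw (of d)
  rw [mem_bot, ← toWord_eq_nil_iff]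
  cases hw : w.toWord with
  | nil => rfl
  | cons c _ =>
    have hc : c ∈ w.toWord.head? := by simp [hw]
    exact absurd ((head_toWord_of_commute_of (hcomm a) c hc).symm.trans
      (head_toWord_of_commute_of (hcomm b) c hc)) hab

end FreeGroup

section CentralAutomorphisms

variable {G : Type*} [Group G]

theorem inv_mul_mul_apply_of_fixes_center {ψ₁ ψ₂ : MulAut G} (hψ₁ : ∀ c ∈ center G, ψ₁ c = c)
    {g : G} (hψ₂ : g⁻¹ * ψ₂ g ∈ center G) :
    g⁻¹ * (ψ₁ * ψ₂) g = (g⁻¹ * ψ₁ g) * (g⁻¹ * ψ₂ g) := by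
  calc g⁻¹ * (ψ₁ * ψ₂) g = g⁻¹ * ψ₁ (g * (g⁻¹ * ψ₂ g)) := by rw [mul_inv_cancel_left]; rfl
    _ = (g⁻¹ * ψ₁ g) * (g⁻¹ * ψ₂ g) := by rw [map_mul, hψ₁ _ hψ₂, mul_assoc]

variable (G) in
def centralAutFixingCenter : Subgroup (MulAut G) where
  carrier := {ψ | (∀ g, g⁻¹ * ψ g ∈ center G) ∧ ∀ c ∈ center G, ψ c = c}
  one_mem' := ⟨fun g => by simp [one_mem], fun _ _ => rfl⟩
  mul_mem' := by
    rintro ψ₁ ψ₂ ⟨hψ₁, hfix₁⟩ ⟨hψ₂, hfix₂⟩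
    refine ⟨fun g => ?_, fun c hc => by rw [MulAut.mul_apply, hfix₂ c hc, hfix₁ c hc]⟩
    rw [inv_mul_mul_apply_of_fixes_center hfix₁ (hψ₂ g)]
    exact mul_mem (hψ₁ g) (hψ₂ g)
  inv_mem' := by
    rintro ψ ⟨hψ, hfix⟩
    refine ⟨fun g => ?_, fun c hc => (MulEquiv.symm_apply_eq ψ).2 (hfix c hc).symm⟩
    obtain ⟨h, rfl⟩ := ψ.surjective g
    simpa using inv_mem (hψ h)

instance : (centralAutFixingCenter G).Normal where
  conj_mem ψ hψ φ := by
    have hφ (c : G) : φ c ∈ center G ↔ c ∈ center G :=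
      SetLike.ext_iff.1 (centerCharacteristic.fixed φ) c
    refine ⟨fun g => ?_, fun c hc => ?_⟩
    · obtain ⟨h, rfl⟩ := φ.surjective g
      simpa [MulAut.mul_apply] using (hφ _).2 (hψ.1 h)
    · obtain ⟨c, rfl⟩ := φ.surjective c
      simp [MulAut.mul_apply, hψ.2 c ((hφ c).1 hc)]

end CentralAutomorphisms

theorem closure_ofAdd_one_pair_eq_top :
    Subgroup.closure {(ofAdd 1, 1), (1, ofAdd 1)} =
      (⊤ : Subgroup (Multiplicative ℤ × Multiplicative ℤ)) := by
  refine eq_top_iff.2 fun p _ => ?_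
  have hp : p = (ofAdd 1, 1) ^ toAdd p.1 * (1, ofAdd 1) ^ toAdd p.2 := by
    ext <;> simp [← ofAdd_zsmul]
  rw [hp]
  exact mul_mem (zpow_mem (subset_closure (by simp)) _) (zpow_mem (subset_closure (by simp)) _)

theorem Subgroup.eq_of_le_of_injective_of_surjective_comp_inclusion {K M : Type*} [Group K]
    [Group M] {H S : Subgroup K} (hHS : H ≤ S) {τ : S →* M} (hτ : Injective τ)
    (hsurj : Surjective (τ.comp (inclusion hHS))) : H = S := by
  refine le_antisymm hHS fun ψ hψ => ?_
  obtain ⟨χ, hχ⟩ := hsurj (τ ⟨ψ, hψ⟩)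
  have : (χ : K) = ψ := congrArg Subtype.val (hτ hχ)
  exact this ▸ χ.2

section IntProdFreeGroup

open FreeGroup

local notation "Γ" => Multiplicative ℤ × FreeGroup Bool

theorem center_intProdFreeGroup : center Γ = (⊤ : Subgroup (Multiplicative ℤ)).prod ⊥ := by
  rw [Subgroup.center_prod, CommGroup.center_eq_top, FreeGroup.center_eq_bot]

theorem eq_one_of_mem_center_of_fst_eq_one {c : Γ} (hc : c ∈ center Γ) (h1 : c.1 = 1) : c = 1 := by
  rw [center_intProdFreeGroup, mem_prod, mem_bot] at hc
  exact Prod.ext h1 hc.2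

theorem intProdFreeGroup_hom_ext {H : Type*} [Monoid H] {f g : Γ →* H}
    (hx : f (1, of true) = g (1, of true)) (hy : f (1, of false) = g (1, of false))
    (hz : f (ofAdd 1, 1) = g (ofAdd 1, 1)) : f = g := by
  have hinl : f.comp (MonoidHom.inl _ _) = g.comp (MonoidHom.inl _ _) := MonoidHom.ext_mint hz
  have hinr : f.comp (MonoidHom.inr _ _) = g.comp (MonoidHom.inr _ _) :=
    FreeGroup.ext_hom _ _ (Bool.forall_bool.2 ⟨hy, hx⟩)
  ext p
  rw [← Prod.fst_mul_snd p, _root_.map_mul, _root_.map_mul]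
  exact congr_arg₂ (· * ·) (DFunLike.congr_fun hinl p.1) (DFunLike.congr_fun hinr p.2)

theorem mem_centralAutFixingCenter_of_generators {ψ : MulAut Γ}
    (hx : (1, of true)⁻¹ * ψ (1, of true) ∈ center Γ)
    (hy : (1, of false)⁻¹ * ψ (1, of false) ∈ center Γ)
    (hz : ψ (ofAdd 1, 1) = (ofAdd 1, 1)) : ψ ∈ centralAutFixingCenter Γ := by
  refine ⟨fun g => ?_, fun c hc => ?_⟩
  · have hquot : QuotientGroup.mk' (center Γ) = (QuotientGroup.mk' (center Γ)).comp ψ.toMonoidHom :=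
      intProdFreeGroup_hom_ext (QuotientGroup.eq.2 hx) (QuotientGroup.eq.2 hy) (by simp [hz])
    exact QuotientGroup.eq.1 (DFunLike.congr_fun hquot g)
  · have hinl : ψ.toMonoidHom.comp (MonoidHom.inl _ _) = MonoidHom.inl _ _ :=
      MonoidHom.ext_mint hz
    obtain ⟨a, b⟩ := c
    rw [center_intProdFreeGroup, mem_prod, mem_bot] at hc
    obtain rfl : b = 1 := hc.2
    exact DFunLike.congr_fun hinl a

def centerShifts : centralAutFixingCenter Γ →* Multiplicative ℤ × Multiplicative ℤ :=
  MonoidHom.mk' (fun ψ => (((1, of true)⁻¹ * ψ.1 (1, of true)).1,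
      ((1, of false)⁻¹ * ψ.1 (1, of false)).1)) <| by
    intro ψ₁ ψ₂
    simp only [Subgroup.coe_mul, inv_mul_mul_apply_of_fixes_center ψ₁.2.2 (ψ₂.2.1 _),
      Prod.fst_mul, Prod.mk_mul_mk]

theorem centerShifts_injective : Injective centerShifts := by
  rw [injective_iff_map_eq_one]
  rintro ⟨ψ, hψ⟩ h
  have hfix (g : Γ) (hg : (g⁻¹ * ψ g).1 = 1) : ψ g = g :=
    (inv_mul_eq_one.1 (eq_one_of_mem_center_of_fst_eq_one (hψ.1 g) hg)).symm
  refine Subtype.ext (MulEquiv.toMonoidHom_injective (intProdFreeGroup_hom_ext ?_ ?_ ?_))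
  · exact hfix _ (congrArg Prod.fst h)
  · exact hfix _ (congrArg Prod.snd h)
  · exact hψ.2 _ (by simp [center_intProdFreeGroup, mem_prod])

end IntProdFreeGroup

theorem stmt_16
    (x y z : Multiplicative ℤ × FreeGroup Bool)
    (hx : x = (1, FreeGroup.of true))
    (hy : y = (1, FreeGroup.of false))
    (hz : z = (Multiplicative.ofAdd (1 : ℤ), 1))
    (ξ η : MulAut (Multiplicative ℤ × FreeGroup Bool))
    (hξ : ξ x = x * z ∧ ξ y = y ∧ ξ z = z)
    (hη : η x = x ∧ η y = y * z ∧ η z = z) :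
    (Subgroup.closure ({ξ, η} : Set (MulAut (Multiplicative ℤ × FreeGroup Bool)))).Normal ∧
    Nonempty ((Subgroup.closure ({ξ, η} : Set (MulAut (Multiplicative ℤ × FreeGroup Bool))))
      ≃* Multiplicative (ℤ × ℤ)) := by
  subst hx hy hz
  obtain ⟨hξx, hξy, hξz⟩ := hξ
  obtain ⟨hηx, hηy, hηz⟩ := hη
  have hz_center : ((ofAdd 1, 1) : Multiplicative ℤ × FreeGroup Bool) ∈ center _ := by
    simp [center_intProdFreeGroup, mem_prod]
  have hξS : ξ ∈ centralAutFixingCenter _ := mem_centralAutFixingCenter_of_generators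
    (by rw [hξx, inv_mul_cancel_left]; exact hz_center)
    (by rw [hξy, inv_mul_cancel]; exact one_mem _) hξz
  have hηS : η ∈ centralAutFixingCenter _ := mem_centralAutFixingCenter_of_generators
    (by rw [hηx, inv_mul_cancel]; exact one_mem _)
    (by rw [hηy, inv_mul_cancel_left]; exact hz_center) hηz
  have hle : closure {ξ, η} ≤ centralAutFixingCenter _ :=
    (closure_le _).2 (Set.insert_subset hξS (Set.singleton_subset_iff.2 hηS))
  set σ := centerShifts.comp (inclusion hle)
  have hσ_surj : Surjective σ := by
    rw [← MonoidHom.range_eq_top, eq_top_iff, ← closure_ofAdd_one_pair_eq_top, closure_le]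
    rintro _ (rfl | rfl)
    · exact ⟨⟨ξ, subset_closure (by simp)⟩, by simp [σ, centerShifts, hξx, hξy]⟩
    · exact ⟨⟨η, subset_closure (by simp)⟩, by simp [σ, centerShifts, hηx, hηy]⟩
  have hσ_inj : Injective σ := centerShifts_injective.comp (inclusion_injective hle)
  refine ⟨?_, ⟨(MulEquiv.ofBijective σ ⟨hσ_inj, hσ_surj⟩).trans
    (MulEquiv.prodMultiplicative ℤ ℤ).symm⟩⟩
  rw [eq_of_le_of_injective_of_surjective_comp_inclusion hle centerShifts_injective hσ_surj]
  infer_instance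
end
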